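/- A set A ⊆ ℕ is an additive IP* set (meets every additive IP set) if and only if A belongs to every additively idempotent ultrafilter on ℕ. -/

import Mathlib

open scoped BigOperators

def FS (x : ℕ → ℕ) : Set ℕ :=
  {n | ∃ H : Finset ℕ, H.Nonempty ∧ n = ∑ t ∈ H, x t}

def FP (x : ℕ → ℕ) : Set ℕ :=
  {n | ∃ H : Finset ℕ, H.Nonempty ∧ n = ∏ t ∈ H, x t}

def uadd (p q : Ultrafilter ℕ) : Ultrafilter ℕ := p.bind fun a => q.map fun b => a + b

def umul (p q : Ultrafilter ℕ) : Ultrafilter ℕ := p.bind fun a => q.map fun b => a * b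

def AddIdem (p : Ultrafilter ℕ) : Prop := uadd p p = p

def MulIdem (p : Ultrafilter ℕ) : Prop := umul p p = p

def AIPstar (A : Set ℕ) : Prop := ∀ x : ℕ → ℕ, (A ∩ FS x).Nonempty

def MIPstar (A : Set ℕ) : Prop :=
  ∀ x : ℕ → ℕ, Function.Injective x → (∀ n, 2 ≤ x n) → (A ∩ FP x).Nonempty

def EXP1 (x : ℕ → ℕ) : Set ℕ :=
  {n | ∃ l : List ℕ, l ≠ [] ∧ l.Chain' (· < ·) ∧ n = l.foldl (fun a i => x i ^ a) 1}

def EXP2 (x : ℕ → ℕ) : Set ℕ :=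
  {n | ∃ (i : ℕ) (l : List ℕ), (i :: l).Chain' (· < ·) ∧ n = x i ^ (l.map x).prod}

def DynMIPstar (C : Set ℕ) : Prop :=
  ∃ (X : Type) (_ : MeasurableSpace X) (μ : MeasureTheory.Measure X),
    MeasureTheory.IsProbabilityMeasure μ ∧
    ∃ T : ℕ → X → X,
      (∀ s, MeasureTheory.MeasurePreserving (T s) μ μ) ∧
      (∀ s t, T (s * t) = T s ∘ T t) ∧
      ∃ A : Set X, MeasurableSet A ∧ 0 < μ A ∧ {s | 0 < μ (A ∩ T s ⁻¹' A)} ⊆ C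


attribute [local instance] Ultrafilter.add Ultrafilter.addSemigroup

lemma uadd_eq_add (p q : Ultrafilter ℕ) : uadd p q = p + q := rfl

lemma hindmanFS_subset_FS (a : Stream' ℕ) : Hindman.FS a ⊆ FS a.get := by
  intro m hm
  induction hm with
  | head' a => exact ⟨{0}, ⟨0, Finset.mem_singleton_self 0⟩, by simp [Stream'.head]⟩
  | tail' a m h ih =>
      obtain ⟨H, hH, rfl⟩ := ih
      refine ⟨H.image (· + 1), hH.image _, ?_⟩
      rw [Finset.sum_image (by intro a _ b _ h; simpa using h)]
      exact Finset.sum_congr rfl fun t _ => rfl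
  | cons' a m h ih =>
      obtain ⟨H, hH, rfl⟩ := ih
      refine ⟨insert 0 (H.image (· + 1)), Finset.insert_nonempty _ _, ?_⟩
      rw [Finset.sum_insert (by simp), Finset.sum_image (by intro a _ b _ h; simpa using h)]
      rfl

lemma FS_eq_hindmanFS (x : ℕ → ℕ) : FS x = Hindman.FS (x : Stream' ℕ) := by
  apply Set.Subset.antisymm
  · rintro m ⟨H, hH, rfl⟩
    exact Hindman.FS.finset_sum (x : Stream' ℕ) H hH
  · exact hindmanFS_subset_FS _

theorem stmt7 (A : Set ℕ) :
    (∀ B : Set ℕ, (∃ x : ℕ → ℕ, FS x ⊆ B) → (A ∩ B).Nonempty) ↔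
      ∀ p : Ultrafilter ℕ, AddIdem p → A ∈ p := by
  constructor
  · intro hA p hp
    rw [AddIdem, uadd_eq_add] at hp
    by_contra hAp
    obtain ⟨a, ha⟩ := Hindman.exists_FS_of_large p hp Aᶜ (Ultrafilter.compl_mem_iff_notMem.mpr hAp)
    obtain ⟨n, hnA, hnB⟩ := hA Aᶜ ⟨a.get, by rw [FS_eq_hindmanFS]; exact ha⟩
    exact hnB hnA
  · intro h B ⟨x, hxB⟩
    obtain ⟨p, hp, hFS⟩ := Hindman.exists_idempotent_ultrafilter_le_FS (x : Stream' ℕ)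
    have hA : A ∈ p := h p (by rw [AddIdem, uadd_eq_add]; exact hp)
    have hB : B ∈ p := p.sets_of_superset hFS (fun m hm => hxB (by rwa [FS_eq_hindmanFS]))
    exact Ultrafilter.nonempty_of_mem (p.inter_sets hA hB)
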